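/- Let G be a simple graph on a finite vertex set V, let c : V → Fin 3 be a proper coloring of G, assume G has no proper coloring with values in Fin 2, and let k : ℕ. Let H be the graph on W = V ⊕ Fin 3 ⊕ ({p : V × Fin 3 // p.2 ≠ c p.1} × Fin (k + 1)) ⊕ Fin 4 with exactly the following adjacencies: Sum.inl u ∼ Sum.inl u' iff G.Adj u u'; the three vertices of the Fin 3 block are pairwise adjacent; each gadget vertex (⟨(u, d), h⟩, s) is adjacent exactly to Sum.inl u and to vertex d of the Fin 3 block; vertices 0 and 1 of the Fin 4 block are adjacent exactly to vertex 0 of the Fin 3 block, and vertices 2 and 3 of the Fin 4 block are adjacent exactly to vertex 1 of the Fin 3 block. Define ĉ : W → Fin 3 by: ĉ(Sum.inl u) = c u; ĉ sends vertex i of the Fin 3 block to i; ĉ sends the gadget vertex (⟨(u, d), h⟩, s) to the unique element of Fin 3 distinct from both c u and d; and on the Fin 4 block, ĉ(0) = 1, ĉ(1) = 2, ĉ(2) = 0, ĉ(3) = 2. Then ĉ is a proper coloring of H, and if D ⊆ V is a defining set of size at most k for c among proper 3-colorings of G, then the image of D under Sum.inl together with the four vertices of the Fin 4 block is a defining set of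 size at most k + 4 for ĉ among proper 3-colorings of H. -/

import Mathlib

/-- `f` is a proper coloring of `G`. -/
def IsProperColoring {U R : Type*} (G : SimpleGraph U) (f : U → R) : Prop :=
  ∀ u v : U, G.Adj u v → f u ≠ f v

/-- `D` is a defining set for `(F, s)`: `s ∈ F` and `s` is the unique element
of `F` agreeing with `s` at every element of `D`. -/
def IsDefiningSet {V R : Type*} (F : Set (V → R)) (s : V → R) (D : Finset V) : Prop :=
  s ∈ F ∧ ∀ f ∈ F, (∀ x ∈ D, f x = s x) → f = s

/-- The vertex set of the graph `H` of Theorem 3.3: the vertices of `G`, a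
triangle `w₀w₁w₂`, for every vertex `u` of `G` and color `d ≠ c u` a block of
`k + 1` gadget vertices, and four pendant vertices. -/
abbrev HVert (V : Type*) (c : V → Fin 3) (k : ℕ) :=
  V ⊕ Fin 3 ⊕ ({p : V × Fin 3 // p.2 ≠ c p.1} × Fin (k + 1)) ⊕ Fin 4

/-- The base relation generating the adjacencies of `H`. -/
def hRel {V : Type*} (G : SimpleGraph V) (c : V → Fin 3) (k : ℕ) :
    HVert V c k → HVert V c k → Prop
  | Sum.inl u, Sum.inl u' => G.Adj u u'
  | Sum.inr (Sum.inl _), Sum.inr (Sum.inl _) => True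
  | Sum.inr (Sum.inr (Sum.inl (g, _))), Sum.inl u => u = g.1.1
  | Sum.inr (Sum.inr (Sum.inl (g, _))), Sum.inr (Sum.inl d) => d = g.1.2
  | Sum.inr (Sum.inr (Sum.inr a)), Sum.inr (Sum.inl j) =>
      ((a = 0 ∨ a = 1) ∧ j = 0) ∨ ((a = 2 ∨ a = 3) ∧ j = 1)
  | _, _ => False

/-- The graph `H` of Theorem 3.3: `Sum.inl u ∼ Sum.inl u'` iff `G.Adj u u'`;
the `Fin 3` block is a triangle; each gadget vertex `(⟨(u, d), _⟩, s)` is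
adjacent exactly to `Sum.inl u` and to vertex `d` of the triangle; pendant
vertices `0, 1` are adjacent exactly to `w₀` and `2, 3` to `w₁`. -/
def HGraph {V : Type*} (G : SimpleGraph V) (c : V → Fin 3) (k : ℕ) :
    SimpleGraph (HVert V c k) :=
  SimpleGraph.fromRel (hRel G c k)

/-- The explicit extension `ĉ` of the coloring `c` of `G` to the graph `H`:
`ĉ` agrees with `c` on `G`, colors `wᵢ` with `i`, colors the gadget vertex at
`(u, d)` with the unique color distinct from both `c u` and `d` (namely
`-(c u + d)`, as the three colors of `Fin 3` sum to `0`), and colors the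
pendant vertices `0, 1, 2, 3` with `1, 2, 0, 2` respectively. -/
def chat {V : Type*} (c : V → Fin 3) (k : ℕ) : HVert V c k → Fin 3
  | Sum.inl u => c u
  | Sum.inr (Sum.inl i) => i
  | Sum.inr (Sum.inr (Sum.inl (g, _))) => -(c g.1.1 + g.1.2)
  | Sum.inr (Sum.inr (Sum.inr a)) =>
      if a = 0 then 1 else if a = 1 then 2 else if a = 2 then 0 else 2

set_option synthInstance.maxSize 1024

/-!
The four pendant vertices force any proper 3-coloring of `H` to color the triangle `wᵢ ↦ i`.
Its restriction to `G` is then a proper coloring agreeing with `c` on `D`, hence equal to `c`;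
finally each gadget vertex at `(u, d)` sees the distinct colors `c u` and `d`, which leaves it
only the third one.
-/

namespace Fin3

lemma neg_add_ne_left : ∀ {a b : Fin 3}, a ≠ b → -(a + b) ≠ a := by decide

lemma neg_add_ne_right : ∀ {a b : Fin 3}, a ≠ b → -(a + b) ≠ b := by decide

lemma eq_neg_add_of_ne : ∀ {a b x : Fin 3}, a ≠ b → x ≠ a → x ≠ b → x = -(a + b) := by
  decide

end Fin3

lemma IsProperColoring.of_comp_hom {U U' R : Type*} {G : SimpleGraph U} {G' : SimpleGraph U'}
    {f : U' → R} (hf : IsProperColoring G' f) (φ : G →g G') : IsProperColoring G (f ∘ φ) :=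
  fun _ _ h => hf _ _ (φ.map_adj h)

section HGraph

variable {V : Type*} {G : SimpleGraph V} {c : V → Fin 3} {k : ℕ}

lemma HGraph.adj_of_hRel {x y : HVert V c k} (hne : x ≠ y) (h : hRel G c k x y) :
    (HGraph G c k).Adj x y := by
  rw [HGraph, SimpleGraph.fromRel_adj]
  exact ⟨hne, Or.inl h⟩

def HGraph.inlHom : G →g HGraph G c k where
  toFun := Sum.inl
  map_rel' h := HGraph.adj_of_hRel (by simp [h.ne]) h

lemma IsProperColoring.ne_of_hRel {R : Type*} {f : HVert V c k → R}
    (hf : IsProperColoring (HGraph G c k) f) {x y : HVert V c k} (hne : x ≠ y)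
    (h : hRel G c k x y) : f x ≠ f y :=
  hf x y (HGraph.adj_of_hRel hne h)

lemma chat_ne_of_hRel (hc : IsProperColoring G c) {x y : HVert V c k} (hne : x ≠ y)
    (h : hRel G c k x y) : chat c k x ≠ chat c k y := by
  rcases x with u | i | ⟨g, s⟩ | a <;> rcases y with u' | i' | ⟨g', s'⟩ | a' <;>
    simp only [hRel] at h
  · exact hc _ _ h
  · simpa [chat] using fun h' => hne (by rw [h'])
  · subst h; exact Fin3.neg_add_ne_left (Ne.symm g.2)
  · subst h; exact Fin3.neg_add_ne_right (Ne.symm g.2)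
  · rcases h with ⟨rfl | rfl, rfl⟩ | ⟨rfl | rfl, rfl⟩ <;> simp [chat]

lemma isProperColoring_chat (hc : IsProperColoring G c) :
    IsProperColoring (HGraph G c k) (chat c k) := by
  intro x y hxy
  rw [HGraph, SimpleGraph.fromRel_adj] at hxy
  obtain ⟨hne, h | h⟩ := hxy
  · exact chat_ne_of_hRel hc hne h
  · exact (chat_ne_of_hRel hc hne.symm h).symm

lemma IsProperColoring.triangle_eq_of_pendant_eq {f : HVert V c k → Fin 3}
    (hf : IsProperColoring (HGraph G c k) f)
    (hpend : ∀ a : Fin 4,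
      f (Sum.inr (Sum.inr (Sum.inr a))) = chat c k (Sum.inr (Sum.inr (Sum.inr a))))
    (i : Fin 3) : f (Sum.inr (Sum.inl i)) = i := by
  have hne (a : Fin 4) (j : Fin 3)
      (h : hRel G c k (Sum.inr (Sum.inr (Sum.inr a))) (Sum.inr (Sum.inl j))) :
      f (Sum.inr (Sum.inl j)) ≠ chat c k (Sum.inr (Sum.inr (Sum.inr a))) :=
    hpend a ▸ (hf.ne_of_hRel (by simp) h).symm
  have hw0 : f (Sum.inr (Sum.inl 0)) = 0 :=
    Fin3.eq_neg_add_of_ne (a := 1) (b := 2) (by decide)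
      (hne 0 0 (by simp [hRel])) (hne 1 0 (by simp [hRel]))
  have hw1 : f (Sum.inr (Sum.inl 1)) = 1 :=
    Fin3.eq_neg_add_of_ne (a := 0) (b := 2) (by decide)
      (hne 2 1 (by simp [hRel])) (hne 3 1 (by simp [hRel]))
  have hw2 : f (Sum.inr (Sum.inl 2)) = 2 :=
    Fin3.eq_neg_add_of_ne (a := 0) (b := 1) (by decide)
      (hw0 ▸ hf.ne_of_hRel (by simp) (by simp [hRel]))
      (hw1 ▸ hf.ne_of_hRel (by simp) (by simp [hRel]))
  fin_cases i <;> assumption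

lemma IsProperColoring.gadget_eq_chat {f : HVert V c k → Fin 3}
    (hf : IsProperColoring (HGraph G c k) f) (g : {p : V × Fin 3 // p.2 ≠ c p.1})
    (s : Fin (k + 1)) (hu : f (Sum.inl g.1.1) = c g.1.1)
    (hw : f (Sum.inr (Sum.inl g.1.2)) = g.1.2) :
    f (Sum.inr (Sum.inr (Sum.inl (g, s)))) = chat c k (Sum.inr (Sum.inr (Sum.inl (g, s)))) :=
  Fin3.eq_neg_add_of_ne (Ne.symm g.2)
    (hu ▸ hf.ne_of_hRel (by simp) (by simp [hRel]))
    (hw ▸ hf.ne_of_hRel (by simp) (by simp [hRel]))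

end HGraph

theorem stmt_12_general {V : Type*} [DecidableEq V] (G : SimpleGraph V)
    (c : V → Fin 3) (hc : IsProperColoring G c) (k : ℕ) :
    IsProperColoring (HGraph G c k) (chat c k) ∧
    ∀ D : Finset V, D.card ≤ k →
      IsDefiningSet {f | IsProperColoring G f} c D →
      (D.image (Sum.inl : V → HVert V c k) ∪
          Finset.univ.image
            (fun a : Fin 4 => (Sum.inr (Sum.inr (Sum.inr a)) : HVert V c k))).card
          ≤ k + 4 ∧
      IsDefiningSet {f | IsProperColoring (HGraph G c k) f} (chat c k)
        (D.image (Sum.inl : V → HVert V c k) ∪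
          Finset.univ.image
            (fun a : Fin 4 => (Sum.inr (Sum.inr (Sum.inr a)) : HVert V c k))) := by
  refine ⟨isProperColoring_chat hc, fun D hD hdef => ⟨?_, isProperColoring_chat hc, ?_⟩⟩
  · exact (Finset.card_union_le _ _).trans <| add_le_add (Finset.card_image_le.trans hD)
      (Finset.card_image_le.trans (by simp))
  intro f (hf : IsProperColoring _ f) hagree
  have hpend (a : Fin 4) :=
    hagree _ (Finset.mem_union_right _ (Finset.mem_image_of_mem _ (Finset.mem_univ a)))
  have hw := hf.triangle_eq_of_pendant_eq hpend
  have hV : f ∘ Sum.inl = c := hdef.2 _ (hf.of_comp_hom HGraph.inlHom)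
    fun u hu => hagree _ (Finset.mem_union_left _ (Finset.mem_image_of_mem _ hu))
  funext x
  rcases x with u | i | ⟨g, s⟩ | a
  · exact congrFun hV u
  · exact hw i
  · exact hf.gadget_eq_chat g s (congrFun hV _) (hw _)
  · exact hpend a

/-- Forward direction of the reduction in the proof of Theorem 3.3: `ĉ` is a
proper 3-coloring of `H`, and the image under `Sum.inl` of a defining set of
size at most `k` for `(G, c)` together with the four pendant vertices is a
defining set of size at most `k + 4` for `(H, ĉ)`. -/
theorem stmt_12 {V : Type*} [Fintype V] [DecidableEq V] (G : SimpleGraph V)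
    (c : V → Fin 3) (hc : IsProperColoring G c)
    (h2 : ¬ ∃ c₂ : V → Fin 2, IsProperColoring G c₂) (k : ℕ) :
    IsProperColoring (HGraph G c k) (chat c k) ∧
    ∀ D : Finset V, D.card ≤ k →
      IsDefiningSet {f | IsProperColoring G f} c D →
      (D.image (Sum.inl : V → HVert V c k) ∪
          Finset.univ.image
            (fun a : Fin 4 => (Sum.inr (Sum.inr (Sum.inr a)) : HVert V c k))).card
          ≤ k + 4 ∧
      IsDefiningSet {f | IsProperColoring (HGraph G c k) f} (chat c k)
        (D.image (Sum.inl : V → HVert V c k) ∪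
          Finset.univ.image
            (fun a : Fin 4 => (Sum.inr (Sum.inr (Sum.inr a)) : HVert V c k))) :=
  stmt_12_general G c hc k
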